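/- arXiv:2501.17735 — 3 statements merged into one kernel-verified Lean document; each statement's English description precedes it below -/
import Mathlib

section
/- Let ν ∈ (0,1], let k ≠ 0 and l be integers, and let η ∈ ℝ. Then there exists a universal constant C > 0 (independent of ν, k, η, l and t) such that for all t ≥ 0 one has ν^{1/3} + √(k²+l²)/√(k² + (η − kt)² + l²) ≤ C · m(t; k, η, l), and moreover m(t; k, η, l) ≤ 1. -/
/-!
Write `N(s) = k² + (η - ks)² + l² = k² + l² + k²(s - η/k)²`. The integrand of `m` is
`-(1/2) (log N)'`, so `m(t) = √N(a) / √N(b)` for the part `[a, b]` of `[0, t]` inside the critical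
interval (and `m(t) = 1` if that part is empty). As `N` increases on `[η/k, ∞)` and
`η/k ≤ a ≤ b ≤ t`, this ratio is at most `1` and at least `√(k² + l²) / √N(t)`; as moreover
`b - η/k ≤ T := 1000 ν^{-1/3}`, it is at least `1 / (1 + T)`, and `ν^{1/3} (1 + T) ≤ 1001`.
-/

/-- The multiplier symbol `m(t; k, η, l)` from Bedrossian–Germain–Masmoudi,
defined as the exponential of the time integral of the shear symbol over the
critical interval `[η/k, η/k + 1000 ν^{-1/3}]`. -/
noncomputable def mSymb (ν : ℝ) (k l : ℤ) (η t : ℝ) : ℝ :=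
  Real.exp (∫ s in (0:ℝ)..t,
    Set.indicator (Set.Icc (η / (k:ℝ)) (η / (k:ℝ) + 1000 * ν ^ ((-1 : ℝ)/3)))
      (fun s => (k:ℝ) * (η - (k:ℝ) * s) /
        ((k:ℝ)^2 + (η - (k:ℝ) * s)^2 + (l:ℝ)^2)) s)

open MeasureTheory Set

def shearSq (K L η s : ℝ) : ℝ := K ^ 2 + (η - K * s) ^ 2 + L ^ 2

noncomputable def shearRatio (K L η a b : ℝ) : ℝ :=
  Real.sqrt (shearSq K L η a) / Real.sqrt (shearSq K L η b)

section Shear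

variable {K : ℝ} (L η : ℝ)

lemma shearSq_eq (hK : K ≠ 0) (s : ℝ) :
    shearSq K L η s = K ^ 2 + L ^ 2 + K ^ 2 * (s - η / K) ^ 2 := by
  unfold shearSq
  field_simp
  ring

lemma le_shearSq (s : ℝ) : K ^ 2 + L ^ 2 ≤ shearSq K L η s := by
  unfold shearSq
  linarith [sq_nonneg (η - K * s)]

lemma shearSq_pos (hK : K ≠ 0) (s : ℝ) : 0 < shearSq K L η s :=
  (by positivity : (0 : ℝ) < K ^ 2 + L ^ 2).trans_le (le_shearSq L η s)

lemma shearSq_le_shearSq (hK : K ≠ 0) {u v : ℝ} (hu : η / K ≤ u) (huv : u ≤ v) :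
    shearSq K L η u ≤ shearSq K L η v := by
  rw [shearSq_eq L η hK, shearSq_eq L η hK]
  have : (u - η / K) ^ 2 ≤ (v - η / K) ^ 2 := by gcongr
  gcongr

lemma shearSq_le_of_le_add (hK : K ≠ 0) {s T : ℝ} (hs : η / K ≤ s) (hsT : s ≤ η / K + T) :
    shearSq K L η s ≤ (K ^ 2 + L ^ 2) * (1 + T) ^ 2 := by
  rw [shearSq_eq L η hK]
  have hT : 0 ≤ T := by linarith
  have : (s - η / K) ^ 2 ≤ T ^ 2 := by gcongr; linarith
  nlinarith [sq_nonneg K, sq_nonneg L]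

lemma hasDerivAt_neg_log_shearSq_div_two (hK : K ≠ 0) (s : ℝ) :
    HasDerivAt (fun s => -Real.log (shearSq K L η s) / 2)
      (K * (η - K * s) / shearSq K L η s) s := by
  have hN : HasDerivAt (shearSq K L η) (2 * (η - K * s) * (-K)) s := by
    have hlin : HasDerivAt (fun s => η - K * s) (-K) s := by
      simpa using ((hasDerivAt_id s).const_mul K).const_sub η
    exact ((hlin.pow 2).const_add (K ^ 2)).add_const (L ^ 2) |>.congr_deriv (by ring)
  refine (((hN.log (shearSq_pos L η hK s).ne').neg).div_const 2).congr_deriv ?_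
  field_simp

lemma exp_integral_eq_shearRatio (hK : K ≠ 0) (a b : ℝ) :
    Real.exp (∫ s in a..b, K * (η - K * s) / shearSq K L η s) = shearRatio K L η a b := by
  have hcont : Continuous fun s => K * (η - K * s) / shearSq K L η s :=
    .div (by fun_prop) (by unfold shearSq; fun_prop) fun s => (shearSq_pos L η hK s).ne'
  have hexp (x : ℝ) : Real.exp (Real.log (shearSq K L η x) / 2) = Real.sqrt (shearSq K L η x) := by
    rw [← Real.log_sqrt (shearSq_pos L η hK x).le,
      Real.exp_log (Real.sqrt_pos.2 (shearSq_pos L η hK x))]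
  rw [intervalIntegral.integral_eq_sub_of_hasDerivAt
      (fun s _ => hasDerivAt_neg_log_shearSq_div_two L η hK s) (hcont.intervalIntegrable a b),
    shearRatio, ← hexp, ← hexp, ← Real.exp_sub]
  ring_nf

lemma shearRatio_le_one (hK : K ≠ 0) {a b : ℝ} (ha : η / K ≤ a) (hab : a ≤ b) :
    shearRatio K L η a b ≤ 1 :=
  div_le_one_of_le₀ (Real.sqrt_le_sqrt (shearSq_le_shearSq L η hK ha hab)) (Real.sqrt_nonneg _)

lemma sqrt_div_sqrt_shearSq_le_shearRatio (hK : K ≠ 0) {a b t : ℝ} (hb : η / K ≤ b)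
    (hbt : b ≤ t) :
    Real.sqrt (K ^ 2 + L ^ 2) / Real.sqrt (shearSq K L η t) ≤ shearRatio K L η a b :=
  div_le_div₀ (Real.sqrt_nonneg _) (Real.sqrt_le_sqrt (le_shearSq L η a))
    (Real.sqrt_pos.2 (shearSq_pos L η hK b)) (Real.sqrt_le_sqrt (shearSq_le_shearSq L η hK hb hbt))

lemma inv_one_add_le_shearRatio (hK : K ≠ 0) {a b T : ℝ} (hb : η / K ≤ b)
    (hbT : b ≤ η / K + T) : (1 + T)⁻¹ ≤ shearRatio K L η a b := by
  have hT : 0 ≤ 1 + T := by linarith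
  have hS : 0 < Real.sqrt (K ^ 2 + L ^ 2) := Real.sqrt_pos.2 (by positivity)
  calc (1 + T)⁻¹ = Real.sqrt (K ^ 2 + L ^ 2) / Real.sqrt ((K ^ 2 + L ^ 2) * (1 + T) ^ 2) := by
        rw [Real.sqrt_mul (by positivity), Real.sqrt_sq hT]
        field_simp
    _ ≤ shearRatio K L η a b :=
        div_le_div₀ (Real.sqrt_nonneg _) (Real.sqrt_le_sqrt (le_shearSq L η a))
          (Real.sqrt_pos.2 (shearSq_pos L η hK b))
          (Real.sqrt_le_sqrt (shearSq_le_of_le_add L η hK hb hbT))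

end Shear

lemma intervalIntegral_indicator_Icc {E : Type*} [NormedAddCommGroup E] [NormedSpace ℝ E]
    (f : ℝ → E) {a b : ℝ} (hab : a ≤ b) (p q : ℝ) :
    ∫ s in a..b, (Icc p q).indicator f s = ∫ s in Ioc (max a p) (min b q), f s := by
  rw [intervalIntegral.integral_of_le hab, setIntegral_indicator measurableSet_Icc,
    ← Ioc_inter_Ioc]
  exact setIntegral_congr_set (ae_eq_set_inter (.refl _ _) Ioc_ae_eq_Icc.symm)

lemma mSymb_eq_one_or_shearRatio (ν : ℝ) {k : ℤ} (hk : k ≠ 0) (l : ℤ) (η : ℝ) {t : ℝ}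
    (ht : 0 ≤ t) :
    mSymb ν k l η t = 1 ∨ ∃ a b, η / k ≤ a ∧ a ≤ b ∧ b ≤ t ∧
      b ≤ η / k + 1000 * ν ^ ((-1 : ℝ) / 3) ∧ mSymb ν k l η t = shearRatio k l η a b := by
  have hK : (k : ℝ) ≠ 0 := Int.cast_ne_zero.2 hk
  unfold mSymb
  rw [intervalIntegral_indicator_Icc _ ht]
  set a := max 0 (η / k)
  set b := min t (η / k + 1000 * ν ^ ((-1 : ℝ) / 3))
  rcases le_or_gt a b with hab | hba
  · right
    refine ⟨a, b, le_max_right _ _, hab, min_le_left _ _, min_le_right _ _, ?_⟩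
    rw [← intervalIntegral.integral_of_le hab, ← exp_integral_eq_shearRatio l η hK]
    rfl
  · left
    rw [Ioc_eq_empty (not_lt.2 hba.le), setIntegral_empty, Real.exp_zero]

lemma rpow_mul_one_add_mul_rpow_neg_le {ν : ℝ} (hν : 0 < ν) (hν1 : ν ≤ 1) {r : ℝ} (hr : 0 ≤ r)
    (c : ℝ) : ν ^ r * (1 + c * ν ^ (-r)) ≤ 1 + c := by
  rw [mul_add, mul_one, mul_left_comm, ← Real.rpow_add hν, add_neg_cancel, Real.rpow_zero,
    mul_one]
  linarith [Real.rpow_le_one hν.le hν1 hr]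

lemma rpow_one_third_le_mul_shearRatio {K : ℝ} (L η : ℝ) {ν : ℝ} (hν : 0 < ν) (hν1 : ν ≤ 1)
    (hK : K ≠ 0) {a b : ℝ} (hb : η / K ≤ b) (hbT : b ≤ η / K + 1000 * ν ^ ((-1 : ℝ) / 3)) :
    ν ^ ((1 : ℝ) / 3) ≤ 1001 * shearRatio K L η a b := by
  set T := 1000 * ν ^ ((-1 : ℝ) / 3)
  have hT : 0 < 1 + T := by positivity
  have hνT : ν ^ ((1 : ℝ) / 3) * (1 + T) ≤ 1001 := by
    convert rpow_mul_one_add_mul_rpow_neg_le hν hν1 (r := 1 / 3) (by norm_num) 1000 using 4 <;>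
      norm_num
  calc ν ^ ((1 : ℝ) / 3) = ν ^ ((1 : ℝ) / 3) * (1 + T) * (1 + T)⁻¹ := by field_simp
    _ ≤ 1001 * shearRatio K L η a b := by
        gcongr
        exact inv_one_add_le_shearRatio L η hK hb hbT

/-- Uniform bounds for the multiplier `m`:
`ν^{1/3} + |(k,l)|/|(k,η-kt,l)| ≤ C m` and `m ≤ 1`. -/
theorem uniform_bounds_m :
    ∃ C : ℝ, 0 < C ∧
      ∀ (ν : ℝ), 0 < ν → ν ≤ 1 →
      ∀ (k l : ℤ), k ≠ 0 →
      ∀ (η t : ℝ), 0 ≤ t →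
        ν ^ ((1:ℝ)/3) +
          Real.sqrt ((k:ℝ)^2 + (l:ℝ)^2) /
            Real.sqrt ((k:ℝ)^2 + (η - (k:ℝ)*t)^2 + (l:ℝ)^2)
          ≤ C * mSymb ν k l η t
        ∧ mSymb ν k l η t ≤ 1 := by
  refine ⟨1002, by norm_num, fun ν hν hν1 k l hk η t ht => ?_⟩
  have hK : (k : ℝ) ≠ 0 := Int.cast_ne_zero.2 hk
  change _ + _ / Real.sqrt (shearSq k l η t) ≤ _ ∧ _
  rcases mSymb_eq_one_or_shearRatio ν hk l η ht with hm | ⟨a, b, ha, hab, hbt, hbT, hm⟩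
  · have hν13 : ν ^ ((1 : ℝ) / 3) ≤ 1 := Real.rpow_le_one hν.le hν1 (by norm_num)
    have hfrac : Real.sqrt ((k : ℝ) ^ 2 + l ^ 2) / Real.sqrt (shearSq k l η t) ≤ 1 :=
      div_le_one_of_le₀ (Real.sqrt_le_sqrt (le_shearSq _ η t)) (Real.sqrt_nonneg _)
    rw [hm]
    constructor <;> linarith
  · have hν13 := rpow_one_third_le_mul_shearRatio l η hν hν1 hK (a := a) (ha.trans hab) hbT
    have hfrac := sqrt_div_sqrt_shearSq_le_shearRatio l η hK (a := a) (ha.trans hab) hbt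
    rw [hm]
    exact ⟨by linarith, shearRatio_le_one l η hK ha hab⟩
end

section
/- Let ν ∈ (0,1], let k ≠ 0 be an integer, and let t ≥ 0. Then there exists a universal constant C > 0 such that for all η, η′ ∈ ℝ and all integers l, l′ one has m(t; k, η, l) ≤ C · m(t; k, η′, l′) · √(1 + (η − η′)² + (l − l′)²). -/
/-!
On the window `[η/k, η/k + T]` the integrand is the derivative of `-½ log (k² + (η - k s)² + l²)`,
so `m(t; k, η, l)² = (k² + u² + l²) / (k² + v² + l²)` with `u = k ρ(-η/k)`, `v = k ρ(t - η/k)`,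
where `ρ` is the projection onto `[0, T]`. Thus `|u| ≤ |v|`, and `u`, `v` move by at most
`|η - η'|` when `η` does. Peetre's inequality bounds the numerator and the denominator of the
two ratios against each other; comparing the size of `(η - η')² + (l - l')²` with the two
weights shows that only one factor `1 + (η - η')² + (l - l')²` is lost.
-/

open Set MeasureTheory Filter Topology

theorem hasDerivAt_comp_projIcc {F g : ℝ → ℝ} {a b x : ℝ} (h : a ≤ b)
    (hF : ∀ y ∈ Ioo a b, HasDerivAt F (g y) y) (hxa : x ≠ a) (hxb : x ≠ b) :
    HasDerivAt (fun y => F (projIcc a b h y)) ((Icc a b).indicator g x) x := by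
  rcases hxa.lt_or_gt with hxa | hxa
  · have hconst : (fun y => F (projIcc a b h y)) =ᶠ[𝓝 x] fun _ => F a :=
      eventually_of_mem (Iio_mem_nhds hxa) fun y hy => by
        simp [projIcc_of_le_left h hy.le]
    rw [indicator_of_notMem fun hx => hxa.not_ge hx.1]
    exact (hasDerivAt_const x (F a)).congr_of_eventuallyEq hconst
  rcases hxb.lt_or_gt with hxb | hxb
  · have hid : (fun y => F (projIcc a b h y)) =ᶠ[𝓝 x] F :=
      eventually_of_mem (Ioo_mem_nhds hxa hxb) fun y hy => by
        simp [projIcc_of_mem h (Ioo_subset_Icc_self hy)]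
    rw [indicator_of_mem (Ioo_subset_Icc_self ⟨hxa, hxb⟩)]
    exact (hF x ⟨hxa, hxb⟩).congr_of_eventuallyEq hid
  · have hconst : (fun y => F (projIcc a b h y)) =ᶠ[𝓝 x] fun _ => F b :=
      eventually_of_mem (Ioi_mem_nhds hxb) fun y hy => by
        simp [projIcc_of_right_le h hy.le]
    rw [indicator_of_notMem fun hx => hxb.not_ge hx.2]
    exact (hasDerivAt_const x (F b)).congr_of_eventuallyEq hconst

theorem integral_indicator_Icc_eq_sub_comp_projIcc {F g : ℝ → ℝ} {a b : ℝ} (h : a ≤ b)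
    (hFc : Continuous F) (hF : ∀ y ∈ Ioo a b, HasDerivAt F (g y) y) {x y : ℝ}
    (hg : IntervalIntegrable g volume x y) :
    ∫ s in x..y, (Icc a b).indicator g s = F (projIcc a b h y) - F (projIcc a b h x) := by
  refine integral_eq_of_hasDerivAt_off_countable _ _ ((countable_singleton a).insert b)
    (hFc.comp (continuous_subtype_val.comp continuous_projIcc)).continuousOn
    (fun s hs => hasDerivAt_comp_projIcc h hF ?_ ?_) ?_
  · rintro rfl; exact hs.2 (by simp)
  · rintro rfl; exact hs.2 (by simp)
  · exact ⟨hg.1.indicator measurableSet_Icc, hg.2.indicator measurableSet_Icc⟩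

theorem hasDerivAt_neg_half_log {K L η : ℝ} (hK : K ≠ 0) (x : ℝ) :
    HasDerivAt (fun s => -(1 / 2) * Real.log (K ^ 2 + (η - K * s) ^ 2 + L ^ 2))
      (K * (η - K * x) / (K ^ 2 + (η - K * x) ^ 2 + L ^ 2)) x := by
  have hD : K ^ 2 + (η - K * x) ^ 2 + L ^ 2 ≠ 0 := by positivity
  have hlin : HasDerivAt (fun s => η - K * s) (-K) x := by
    simpa using ((hasDerivAt_id x).const_mul K).const_sub η
  have hquad :
      HasDerivAt (fun s => K ^ 2 + (η - K * s) ^ 2 + L ^ 2) (2 * (η - K * x) * -K) x := by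
    simpa using ((hlin.fun_pow 2).const_add (K ^ 2)).add_const (L ^ 2)
  refine ((hquad.log hD).const_mul (-(1 / 2))).congr_deriv ?_
  field_simp

theorem coe_projIcc_add {a T : ℝ} (hT : 0 ≤ T) (h : a ≤ a + T) (x : ℝ) :
    (projIcc a (a + T) h x : ℝ) = a + projIcc 0 T hT (x - a) := by
  rw [coe_projIcc, coe_projIcc, ← max_add_add_left, ← min_add_add_left, add_zero, add_sub_cancel]

theorem exp_neg_half_log_sub {A B : ℝ} (hA : 0 < A) (hB : 0 < B) :
    Real.exp (-(1 / 2) * Real.log A - -(1 / 2) * Real.log B) = √(B / A) := by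
  rw [Real.sqrt_eq_rpow, Real.rpow_def_of_pos (div_pos hB hA), Real.log_div hB.ne' hA.ne']
  ring_nf

theorem exp_integral_indicator_eq_sqrt {K L η T : ℝ} (hK : K ≠ 0) (hT : 0 ≤ T) (t : ℝ) :
    Real.exp (∫ s in (0:ℝ)..t, (Icc (η / K) (η / K + T)).indicator
        (fun s => K * (η - K * s) / (K ^ 2 + (η - K * s) ^ 2 + L ^ 2)) s) =
      √((K ^ 2 + (K * projIcc 0 T hT (-(η / K))) ^ 2 + L ^ 2) /
        (K ^ 2 + (K * projIcc 0 T hT (t - η / K)) ^ 2 + L ^ 2)) := by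
  have hab : η / K ≤ η / K + T := le_add_of_nonneg_right hT
  have hg : Continuous fun s => K * (η - K * s) / (K ^ 2 + (η - K * s) ^ 2 + L ^ 2) :=
    (by fun_prop : Continuous _).div (by fun_prop) fun s => by positivity
  have hF := fun x => hasDerivAt_neg_half_log (L := L) (η := η) hK x
  have hshift : ∀ r, η - K * (η / K + r) = -(K * r) := fun r => by field_simp; ring
  rw [integral_indicator_Icc_eq_sub_comp_projIcc hab
      (continuous_iff_continuousAt.2 fun x => (hF x).continuousAt) (fun y _ => hF y)
      (hg.intervalIntegrable 0 t),
    coe_projIcc_add hT hab, coe_projIcc_add hT hab, hshift, hshift, neg_sq, neg_sq, zero_sub,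
    exp_neg_half_log_sub (by positivity) (by positivity)]

theorem sq_mul_projIcc_le_sq {T : ℝ} (hT : 0 ≤ T) (K : ℝ) {x y : ℝ} (hxy : x ≤ y) :
    (K * projIcc 0 T hT x) ^ 2 ≤ (K * projIcc 0 T hT y) ^ 2 := by
  have h0 : (0 : ℝ) ≤ projIcc 0 T hT x := (projIcc 0 T hT x).2.1
  rw [mul_pow, mul_pow]
  gcongr
  exact monotone_projIcc hT hxy

theorem sq_mul_projIcc_sub_div_sub_le {K T : ℝ} (hK : K ≠ 0) (hT : 0 ≤ T) (s η η' : ℝ) :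
    (K * projIcc 0 T hT (s - η / K) - K * projIcc 0 T hT (s - η' / K)) ^ 2 ≤ (η - η') ^ 2 := by
  calc _ = K ^ 2 * ((projIcc 0 T hT (s - η / K) : ℝ) - projIcc 0 T hT (s - η' / K)) ^ 2 := by
        ring
    _ ≤ K ^ 2 * ((s - η / K) - (s - η' / K)) ^ 2 :=
        mul_le_mul_of_nonneg_left (sq_le_sq.2 (abs_projIcc_sub_projIcc hT)) (sq_nonneg K)
    _ = (η - η') ^ 2 := by field_simp; ring

theorem add_sq_add_sq_le_two_mul {κ : ℝ} (hκ : 0 ≤ κ) (x y x' y' : ℝ) :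
    κ + x ^ 2 + y ^ 2 ≤ 2 * (κ + x' ^ 2 + y' ^ 2) + 2 * ((x - x') ^ 2 + (y - y') ^ 2) := by
  nlinarith [sq_nonneg (x - 2 * x'), sq_nonneg (y - 2 * y')]

theorem mul_le_eight_mul_mul_one_add {p q a b δ : ℝ} (ha : 1 ≤ a) (hb : 1 ≤ b) (hδ : 0 ≤ δ)
    (hp : 0 ≤ p) (hpb : p ≤ b) (hpa : p ≤ 2 * a + 2 * δ) (hqb : q ≤ 2 * b + 2 * δ) :
    p * q ≤ 8 * a * b * (1 + δ) := by
  have ha0 : 0 ≤ a := by linarith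
  have hb0 : 0 ≤ b := by linarith
  rcases lt_or_ge q 0 with hq | hq
  · exact (mul_nonpos_of_nonneg_of_nonpos hp hq.le).trans (by positivity)
  rcases le_or_gt δ a with hδa | hδa
  · calc p * q ≤ (4 * a) * (2 * b * (1 + δ)) := by gcongr <;> nlinarith
      _ = 8 * a * b * (1 + δ) := by ring
  rcases le_or_gt δ b with hδb | hδb
  · calc p * q ≤ (2 * a * (1 + δ)) * (4 * b) := by gcongr <;> nlinarith
      _ = 8 * a * b * (1 + δ) := by ring
  · calc p * q ≤ b * (4 * δ) := by gcongr; linarith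
      _ ≤ 8 * a * b * (1 + δ) := by
        nlinarith [mul_le_mul_of_nonneg_left ha (by positivity : 0 ≤ b * δ)]

theorem sqrt_div_le_sqrt_eight_mul {κ u v u' v' l l' δ : ℝ} (hκ : 1 ≤ κ) (huv : u ^ 2 ≤ v ^ 2)
    (hu : (u - u') ^ 2 ≤ δ ^ 2) (hv : (v - v') ^ 2 ≤ δ ^ 2) :
    √((κ + u ^ 2 + l ^ 2) / (κ + v ^ 2 + l ^ 2)) ≤
      √8 * √((κ + u' ^ 2 + l' ^ 2) / (κ + v' ^ 2 + l' ^ 2)) * √(1 + δ ^ 2 + (l - l') ^ 2) := by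
  set Δ := δ ^ 2 + (l - l') ^ 2
  have hκ0 : 0 ≤ κ := by linarith
  have hp := add_sq_add_sq_le_two_mul hκ0 u l u' l'
  have hq := add_sq_add_sq_le_two_mul hκ0 v' l' v l
  have key : (κ + u ^ 2 + l ^ 2) * (κ + v' ^ 2 + l' ^ 2) ≤
      8 * (κ + u' ^ 2 + l' ^ 2) * (κ + v ^ 2 + l ^ 2) * (1 + Δ) := by
    refine mul_le_eight_mul_mul_one_add (by linarith [sq_nonneg u', sq_nonneg l'])
      (by linarith [sq_nonneg v, sq_nonneg l]) (by positivity) (by positivity) (by linarith) ?_ ?_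
    · linarith
    · linarith
  rw [← Real.sqrt_mul (by norm_num), ← Real.sqrt_mul (by positivity), add_assoc 1]
  gcongr
  have hQ' : 0 < κ + v' ^ 2 + l' ^ 2 := by positivity
  rw [div_le_iff₀ (by positivity), mul_div_assoc', div_mul_eq_mul_div, div_mul_eq_mul_div,
    le_div_iff₀ hQ']
  linarith

/-- Product estimate: `m(t,k,η,l) ≤ C m(t,k,η',l') ⟨η-η', l-l'⟩`. -/
theorem product_estimate_m :
    ∃ C : ℝ, 0 < C ∧
      ∀ (ν : ℝ), 0 < ν → ν ≤ 1 →
      ∀ (k : ℤ), k ≠ 0 →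
      ∀ (t : ℝ), 0 ≤ t →
      ∀ (η η' : ℝ) (l l' : ℤ),
        mSymb ν k l η t ≤
          C * mSymb ν k l' η' t *
            Real.sqrt (1 + (η - η')^2 + ((l:ℝ) - (l':ℝ))^2) := by
  refine ⟨√8, by positivity, fun ν hν _ k hk t ht η η' l l' => ?_⟩
  have hK : (k : ℝ) ≠ 0 := Int.cast_ne_zero.mpr hk
  have hκ : 1 ≤ (k : ℝ) ^ 2 := mod_cast (one_le_sq_iff_one_le_abs k).2 (Int.one_le_abs hk)
  have hT : 0 ≤ 1000 * ν ^ ((-1 : ℝ) / 3) := by positivity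
  have hlip := sq_mul_projIcc_sub_div_sub_le hK hT
  rw [mSymb, mSymb, exp_integral_indicator_eq_sqrt hK hT, exp_integral_indicator_eq_sqrt hK hT]
  refine sqrt_div_le_sqrt_eight_mul hκ (sq_mul_projIcc_le_sq hT _ ?_) ?_ (hlip t η η')
  · linarith
  · simpa using hlip 0 η η'
end

section
/- Let ν ∈ (0,1], α > 0, let k ≠ 0 and l be integers, and let η ∈ ℝ. Set ρ_L(t) := √(k² + (η − kt)² + l²). Suppose Q, W : [0,∞) → ℂ are differentiable and solve the linearized nonzero-mode system in Fourier variables: Q′(t) = −ν ρ_L(t)² Q(t) − i α (l/ρ_L(t)) W(t) and W′(t) = −ν ρ_L(t)² W(t) − (k(η − kt)/ρ_L(t)²) W(t) − i α (l/ρ_L(t)) Q(t). Then for all t ≥ 0 one has m(t; k, η, l)² (|Q(t)|² + |W(t)|²) ≤ e^{−ν k² t³ / 12} (|Q(0)|² + |W(0)|²). -/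
/-- The moving-frame frequency modulus `ρ_L(t) = |(k, η - kt, l)|`. -/
noncomputable def rhoL (k l : ℤ) (η t : ℝ) : ℝ :=
  Real.sqrt ((k:ℝ)^2 + (η - (k:ℝ)*t)^2 + (l:ℝ)^2)

open Real Set MeasureTheory

lemma continuousAt_indicator_Icc {α β : Type*} [TopologicalSpace α] [LinearOrder α]
    [OrderTopology α] [DenselyOrdered α] [NoMinOrder α] [NoMaxOrder α] [TopologicalSpace β]
    [Zero β] {f : α → β} {a b t : α} (hf : Continuous f) (ha : f a = 0)
    (ht : t ≠ b) : ContinuousAt ((Icc a b).indicator f) t := by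
  rcases lt_or_ge b a with hba | hab
  · simp only [Icc_eq_empty_of_lt hba, indicator_empty]
    exact continuousAt_const
  have hcont : ContinuousOn ((Icc a b).indicator f) {b}ᶜ := by
    rw [← piecewise_eq_indicator]
    refine ContinuousOn.piecewise ?_ hf.continuousOn continuousOn_const
    rintro x ⟨hxb, hx⟩
    rw [frontier_Icc hab] at hx
    rcases hx with rfl | rfl
    · exact ha
    · exact absurd rfl hxb
  exact hcont.continuousAt (isOpen_compl_singleton.mem_nhds ht)

lemma antitoneOn_Ici_of_hasDerivAt_nonpos_of_ne {f f' : ℝ → ℝ} {a b : ℝ}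
    (hf : ContinuousOn f (Ici a)) (hf' : ∀ x, a < x → x ≠ b → HasDerivAt f (f' x) x)
    (hf'_nonpos : ∀ x, a < x → x ≠ b → f' x ≤ 0) : AntitoneOn f (Ici a) := by
  set m := max a b
  have hleft : AntitoneOn f (Icc a m) := by
    have hne (x : ℝ) (hx : x ∈ interior (Icc a m)) : a < x ∧ x ≠ b := by
      rw [interior_Icc] at hx
      exact ⟨hx.1, ((lt_max_iff.mp hx.2).resolve_left hx.1.not_gt).ne⟩
    exact antitoneOn_of_hasDerivWithinAt_nonpos (convex_Icc a m) (hf.mono Icc_subset_Ici_self)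
      (fun x hx ↦ (hf' x (hne x hx).1 (hne x hx).2).hasDerivWithinAt)
      (fun x hx ↦ hf'_nonpos x (hne x hx).1 (hne x hx).2)
  have hright : AntitoneOn f (Ici m) := by
    have hne (x : ℝ) (hx : x ∈ interior (Ici m)) : a < x ∧ x ≠ b := by
      rw [interior_Ici, mem_Ioi, max_lt_iff] at hx
      exact ⟨hx.1, hx.2.ne'⟩
    exact antitoneOn_of_hasDerivWithinAt_nonpos (convex_Ici m)
      (hf.mono (Ici_subset_Ici.mpr (le_max_left a b)))
      (fun x hx ↦ (hf' x (hne x hx).1 (hne x hx).2).hasDerivWithinAt)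
      (fun x hx ↦ hf'_nonpos x (hne x hx).1 (hne x hx).2)
  rw [← Icc_union_Ici_eq_Ici (le_max_left a b)]
  exact hleft.union_right hright (isGreatest_Icc (le_max_left a b)) isLeast_Ici

lemma hasDerivAt_normSq_add_normSq {Q W : ℝ → ℂ} {t a c β : ℝ}
    (hQ : HasDerivAt Q (-(a : ℂ) * Q t - Complex.I * (β : ℂ) * W t) t)
    (hW : HasDerivAt W (-(a : ℂ) * W t - (c : ℂ) * W t - Complex.I * (β : ℂ) * Q t) t) :
    HasDerivAt (fun s ↦ ‖Q s‖ ^ 2 + ‖W s‖ ^ 2)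
      (-2 * a * (‖Q t‖ ^ 2 + ‖W t‖ ^ 2) - 2 * c * ‖W t‖ ^ 2) t := by
  refine (hQ.norm_sq.add hW.norm_sq).congr_deriv ?_
  simp only [Complex.inner, Complex.sq_norm, Complex.normSq_apply, Complex.mul_re,
    Complex.mul_im, Complex.sub_re, Complex.sub_im, Complex.neg_re, Complex.neg_im,
    Complex.conj_re, Complex.conj_im, Complex.I_re, Complex.I_im, Complex.ofReal_re,
    Complex.ofReal_im]
  ring

noncomputable def shearRate (k l : ℤ) (η s : ℝ) : ℝ :=
  k * (η - k * s) / (k ^ 2 + (η - k * s) ^ 2 + l ^ 2)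

def criticalWindow (ν : ℝ) (k : ℤ) (η : ℝ) : Set ℝ :=
  Icc (η / k) (η / k + 1000 * ν ^ ((-1 : ℝ) / 3))

noncomputable def mExponent (ν : ℝ) (k l : ℤ) (η t : ℝ) : ℝ :=
  ∫ s in (0 : ℝ)..t, (criticalWindow ν k η).indicator (shearRate k l η) s

/-- `∫₀ᵗ ν ρ_L(s)² ds`. -/
noncomputable def dissipationIntegral (ν : ℝ) (k l : ℤ) (η t : ℝ) : ℝ :=
  ν * ((k ^ 2 + l ^ 2 + η ^ 2) * t - η * k * t ^ 2 + k ^ 2 * t ^ 3 / 3)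

section

variable {ν : ℝ} {k : ℤ} (l : ℤ) {η : ℝ}

lemma mSymb_eq_exp_mExponent (t : ℝ) : mSymb ν k l η t = exp (mExponent ν k l η t) := rfl

lemma rhoL_sq (t : ℝ) : rhoL k l η t ^ 2 = k ^ 2 + (η - k * t) ^ 2 + l ^ 2 :=
  sq_sqrt (by positivity)

lemma shearRate_eq_div_rhoL_sq (t : ℝ) :
    shearRate k l η t = k * (η - k * t) / rhoL k l η t ^ 2 := by
  rw [rhoL_sq, shearRate]

lemma rhoL_sq_pos (hk : k ≠ 0) (t : ℝ) : 0 < rhoL k l η t ^ 2 := by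
  rw [rhoL_sq]
  have : (0 : ℝ) < k ^ 2 := by positivity
  positivity

lemma continuous_shearRate (hk : k ≠ 0) : Continuous (shearRate k l η) :=
  (by fun_prop : Continuous fun s : ℝ ↦ (k : ℝ) * (η - k * s)).div (by fun_prop)
    fun s ↦ by rw [← rhoL_sq]; exact (rhoL_sq_pos l hk s).ne'

lemma shearRate_eq (hk : k ≠ 0) (s : ℝ) :
    shearRate k l η s = k ^ 2 * (η / k - s) / rhoL k l η s ^ 2 := by
  rw [shearRate_eq_div_rhoL_sq]
  congr 1
  field_simp

lemma shearRate_nonneg_of_le (hk : k ≠ 0) {s : ℝ} (hs : s ≤ η / k) : 0 ≤ shearRate k l η s := by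
  rw [shearRate_eq l hk]
  exact div_nonneg (mul_nonneg (sq_nonneg _) (sub_nonneg.mpr hs)) (sq_nonneg _)

lemma shearRate_nonpos_of_le (hk : k ≠ 0) {s : ℝ} (hs : η / k ≤ s) : shearRate k l η s ≤ 0 := by
  rw [shearRate_eq l hk]
  exact div_nonpos_of_nonpos_of_nonneg (mul_nonpos_of_nonneg_of_nonpos (sq_nonneg _)
    (sub_nonpos.mpr hs)) (sq_nonneg _)

lemma mul_rpow_neg_one_third_cube (hν : 0 < ν) : ν * (ν ^ ((-1 : ℝ) / 3)) ^ 3 = 1 := by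
  rw [← rpow_natCast, ← rpow_mul hν.le]
  norm_num [rpow_neg_one, hν.ne']

lemma neg_two_mul_shearRate_le (hν : 0 < ν) (hk : k ≠ 0) {s : ℝ}
    (hs : η / k + 1000 * ν ^ ((-1 : ℝ) / 3) < s) :
    -(2 * shearRate k l η s) ≤ ν * rhoL k l η s ^ 2 := by
  set σ := s - η / k
  have hσ : 1000 * ν ^ ((-1 : ℝ) / 3) < σ := by simp only [σ]; linarith
  have hσ0 : 0 < σ := lt_trans (by positivity) hσ
  have hk1 : (1 : ℝ) ≤ k ^ 2 := by
    exact_mod_cast (one_le_sq_iff_one_le_abs _).mpr (Int.one_le_abs hk)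
  have hνσ : 2 ≤ ν * σ ^ 3 := calc
    (2 : ℝ) ≤ 1000 ^ 3 * (ν * (ν ^ ((-1 : ℝ) / 3)) ^ 3) := by
      rw [mul_rpow_neg_one_third_cube hν]; norm_num
    _ = ν * (1000 * ν ^ ((-1 : ℝ) / 3)) ^ 3 := by ring
    _ ≤ ν * σ ^ 3 := by gcongr
  have hρσ : k ^ 2 * σ ^ 2 ≤ rhoL k l η s ^ 2 := by
    have : (η - k * s) ^ 2 = k ^ 2 * σ ^ 2 := by simp only [σ]; field_simp; ring
    rw [rhoL_sq, this]
    nlinarith [sq_nonneg (k : ℝ), sq_nonneg (l : ℝ)]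
  have hkσ : 2 * k ^ 2 * σ ≤ ν * (k ^ 2 * σ ^ 2) ^ 2 := calc
    2 * k ^ 2 * σ ≤ 2 * (k ^ 2 * k ^ 2 * σ) := by
      linarith [mul_le_mul_of_nonneg_right hk1 (by positivity : (0 : ℝ) ≤ k ^ 2 * σ)]
    _ ≤ (ν * σ ^ 3) * (k ^ 2 * k ^ 2 * σ) := by gcongr
    _ = ν * (k ^ 2 * σ ^ 2) ^ 2 := by ring
  rw [shearRate_eq l hk, show -(2 * (k ^ 2 * (η / k - s) / rhoL k l η s ^ 2)) =
    2 * k ^ 2 * σ / rhoL k l η s ^ 2 by ring, div_le_iff₀ (rhoL_sq_pos l hk s)]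
  calc 2 * k ^ 2 * σ ≤ ν * (k ^ 2 * σ ^ 2) ^ 2 := hkσ
    _ ≤ ν * (rhoL k l η s ^ 2) ^ 2 := by gcongr
    _ = ν * rhoL k l η s ^ 2 * rhoL k l η s ^ 2 := by ring

lemma two_mul_indicator_shearRate_sub_le (hν : 0 < ν) (hk : k ≠ 0) (s : ℝ) {N y : ℝ}
    (hy : 0 ≤ y) (hyN : y ≤ N) :
    2 * (criticalWindow ν k η).indicator (shearRate k l η) s * N - 2 * shearRate k l η s * y
      ≤ ν * rhoL k l η s ^ 2 * N := by
  have hνP : 0 ≤ ν * rhoL k l η s ^ 2 := by positivity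
  by_cases hs : s ∈ criticalWindow ν k η
  · rw [indicator_of_mem hs]
    nlinarith [shearRate_nonpos_of_le l hk hs.1, mul_nonneg hνP (hy.trans hyN)]
  · rw [indicator_of_notMem hs, mul_zero, zero_mul, zero_sub]
    rcases le_or_gt s (η / k) with hle | hgt
    · nlinarith [shearRate_nonneg_of_le l hk hle, mul_nonneg hνP (hy.trans hyN)]
    · have hb : η / k + 1000 * ν ^ ((-1 : ℝ) / 3) < s := by
        by_contra! h
        exact hs ⟨hgt.le, h⟩
      nlinarith [neg_two_mul_shearRate_le l hν hk hb, mul_le_mul_of_nonneg_left hyN hνP]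

lemma intervalIntegrable_indicator_shearRate (hk : k ≠ 0) (a b : ℝ) :
    IntervalIntegrable ((criticalWindow ν k η).indicator (shearRate k l η)) volume a b := by
  have h := (continuous_shearRate l hk (η := η)).intervalIntegrable (μ := volume) a b
  exact ⟨h.1.indicator measurableSet_Icc, h.2.indicator measurableSet_Icc⟩

lemma continuous_mExponent (hk : k ≠ 0) : Continuous (mExponent ν k l η) :=
  intervalIntegral.continuous_primitive (intervalIntegrable_indicator_shearRate l hk) 0

lemma hasDerivAt_mExponent (hk : k ≠ 0) {t : ℝ} (ht : t ≠ η / k + 1000 * ν ^ ((-1 : ℝ) / 3)) :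
    HasDerivAt (mExponent ν k l η) ((criticalWindow ν k η).indicator (shearRate k l η) t) t :=
  intervalIntegral.integral_hasDerivAt_right (intervalIntegrable_indicator_shearRate l hk 0 t)
    (((continuous_shearRate l hk).measurable.indicator
      measurableSet_Icc).aestronglyMeasurable.stronglyMeasurableAtFilter)
    (continuousAt_indicator_Icc (continuous_shearRate l hk)
      (by simp [shearRate, mul_div_cancel₀ η (Int.cast_ne_zero.mpr hk)]) ht)

lemma hasDerivAt_dissipationIntegral (t : ℝ) :
    HasDerivAt (dissipationIntegral ν k l η) (ν * rhoL k l η t ^ 2) t := by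
  rw [rhoL_sq]
  refine (((((hasDerivAt_id' t).const_mul _).sub ((hasDerivAt_pow 2 t).const_mul _)).add
    (((hasDerivAt_pow 3 t).const_mul _).div_const 3)).const_mul ν).congr_deriv ?_
  push_cast
  ring

lemma mul_cube_div_twelve_le_dissipationIntegral (hν : 0 ≤ ν) {t : ℝ} (ht : 0 ≤ t) :
    ν * k ^ 2 * t ^ 3 / 12 ≤ dissipationIntegral ν k l η t := by
  have key : (k : ℝ) ^ 2 * t ^ 3 / 12 ≤
      (k ^ 2 + l ^ 2 + η ^ 2) * t - η * k * t ^ 2 + k ^ 2 * t ^ 3 / 3 := by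
    nlinarith [mul_nonneg ht (sq_nonneg (η - k * t / 2)), mul_nonneg (sq_nonneg (k : ℝ)) ht,
      mul_nonneg (sq_nonneg (l : ℝ)) ht]
  unfold dissipationIntegral
  nlinarith [mul_le_mul_of_nonneg_left key hν]

lemma antitoneOn_mul_exp_mExponent_dissipationIntegral (hν : 0 < ν) (hk : k ≠ 0) {N y : ℝ → ℝ} (hy : ∀ t, 0 ≤ y t) (hyN : ∀ t, y t ≤ N t)
    (hN : ∀ t, 0 ≤ t → HasDerivAt N
      (-2 * (ν * rhoL k l η t ^ 2) * N t - 2 * shearRate k l η t * y t) t) :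
    AntitoneOn (fun t ↦ N t * exp (2 * mExponent ν k l η t + dissipationIntegral ν k l η t))
      (Ici 0) := by
  have hE : Continuous fun t ↦
      exp (2 * mExponent ν k l η t + dissipationIntegral ν k l η t) := by
    have := continuous_mExponent (ν := ν) l (η := η) hk
    unfold dissipationIntegral
    fun_prop
  refine antitoneOn_Ici_of_hasDerivAt_nonpos_of_ne (b := η / k + 1000 * ν ^ ((-1 : ℝ) / 3))
    (f' := fun t ↦ exp (2 * mExponent ν k l η t + dissipationIntegral ν k l η t) *
      (2 * (criticalWindow ν k η).indicator (shearRate k l η) t * N t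
        - 2 * shearRate k l η t * y t - ν * rhoL k l η t ^ 2 * N t))
    (fun t ht ↦ (hN t ht).continuousAt.continuousWithinAt.mul hE.continuousWithinAt)
    (fun t ht hb ↦ ?_) (fun t _ _ ↦ ?_)
  · refine ((hN t ht.le).mul (((hasDerivAt_mExponent l hk hb).const_mul 2).add
      (hasDerivAt_dissipationIntegral l t)).exp).congr_deriv ?_
    simp only [Pi.add_apply]
    ring
  · exact mul_nonpos_of_nonneg_of_nonpos (exp_pos _).le
      (sub_nonpos.mpr (two_mul_indicator_shearRate_sub_le l hν hk t (hy t) (hyN t)))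

end

theorem linear_enhanced_dissipation_nonzero_modes_general
    (ν α : ℝ) (hν : 0 < ν)
    (k l : ℤ) (hk : k ≠ 0) (η : ℝ)
    (Q W : ℝ → ℂ)
    (hQ : ∀ t : ℝ, 0 ≤ t →
      HasDerivAt Q
        (-((ν * (rhoL k l η t)^2 : ℝ) : ℂ) * Q t
          - Complex.I * ((α * (l:ℝ) / rhoL k l η t : ℝ) : ℂ) * W t) t)
    (hW : ∀ t : ℝ, 0 ≤ t →
      HasDerivAt W
        (-((ν * (rhoL k l η t)^2 : ℝ) : ℂ) * W t
          - (((k:ℝ) * (η - (k:ℝ)*t) / (rhoL k l η t)^2 : ℝ) : ℂ) * W t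
          - Complex.I * ((α * (l:ℝ) / rhoL k l η t : ℝ) : ℂ) * Q t) t) :
    ∀ t : ℝ, 0 ≤ t →
      (mSymb ν k l η t)^2 * (‖Q t‖^2 + ‖W t‖^2)
        ≤ Real.exp (-(ν * (k:ℝ)^2 * t^3) / 12) * (‖Q 0‖^2 + ‖W 0‖^2) := by
  intro t ht
  set N := fun s ↦ ‖Q s‖ ^ 2 + ‖W s‖ ^ 2
  set I := dissipationIntegral ν k l η
  have hN (s : ℝ) (hs : 0 ≤ s) : HasDerivAt N
      (-2 * (ν * rhoL k l η s ^ 2) * N s - 2 * shearRate k l η s * ‖W s‖ ^ 2) s := by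
    rw [shearRate_eq_div_rhoL_sq]
    exact hasDerivAt_normSq_add_normSq (hQ s hs) (hW s hs)
  have hanti := antitoneOn_mul_exp_mExponent_dissipationIntegral l hν hk
    (fun s ↦ sq_nonneg ‖W s‖) (fun s ↦ le_add_of_nonneg_left (sq_nonneg ‖Q s‖)) hN
  calc mSymb ν k l η t ^ 2 * N t = N t * exp (2 * mExponent ν k l η t + I t) * exp (-I t) := by
        rw [mSymb_eq_exp_mExponent, mul_assoc, ← exp_add, add_neg_cancel_right, ← exp_nat_mul]
        push_cast
        ring
    _ ≤ N 0 * exp (2 * mExponent ν k l η 0 + I 0) * exp (-I t) :=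
        mul_le_mul_of_nonneg_right (hanti self_mem_Ici ht ht) (exp_pos _).le
    _ = exp (-I t) * N 0 := by simp [mExponent, I, dissipationIntegral, mul_comm]
    _ ≤ exp (-(ν * k ^ 2 * t ^ 3) / 12) * N 0 := by
        gcongr
        linarith [mul_cube_div_twelve_le_dissipationIntegral (k := k) l (η := η) hν.le ht]

/-- Linear enhanced dissipation for the nonzero modes of the linearized
rotating Couette system in the good unknowns `(Q, W)`:
`m(t)² (|Q(t)|² + |W(t)|²) ≤ e^{-ν k² t³/12} (|Q(0)|² + |W(0)|²)`. -/
theorem linear_enhanced_dissipation_nonzero_modes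
    (ν α : ℝ) (hν : 0 < ν) (hν1 : ν ≤ 1) (hα : 0 < α)
    (k l : ℤ) (hk : k ≠ 0) (η : ℝ)
    (Q W : ℝ → ℂ)
    (hQ : ∀ t : ℝ, 0 ≤ t →
      HasDerivAt Q
        (-((ν * (rhoL k l η t)^2 : ℝ) : ℂ) * Q t
          - Complex.I * ((α * (l:ℝ) / rhoL k l η t : ℝ) : ℂ) * W t) t)
    (hW : ∀ t : ℝ, 0 ≤ t →
      HasDerivAt W
        (-((ν * (rhoL k l η t)^2 : ℝ) : ℂ) * W t
          - (((k:ℝ) * (η - (k:ℝ)*t) / (rhoL k l η t)^2 : ℝ) : ℂ) * W t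
          - Complex.I * ((α * (l:ℝ) / rhoL k l η t : ℝ) : ℂ) * Q t) t) :
    ∀ t : ℝ, 0 ≤ t →
      (mSymb ν k l η t)^2 * (‖Q t‖^2 + ‖W t‖^2)
        ≤ Real.exp (-(ν * (k:ℝ)^2 * t^3) / 12) * (‖Q 0‖^2 + ‖W 0‖^2) :=
  linear_enhanced_dissipation_nonzero_modes_general ν α hν k l hk η Q W hQ hW
end
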